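/- Let t ≤ k be positive integers, and consider two blocks B = X_m ∪ {x^{m+i}_{p_i} : 1 ≤ i ≤ k-|X_m|} and B' = X_n ∪ {x^{n+j}_{q_j} : 1 ≤ j ≤ k-|X_n|} of 𝔽(k,t) with m ≠ n. Then, since k - |X_m| ≥ ⌊t/2⌋ and the cyclic distance between m and n on the t-cycle is at most ⌊t/2⌋, the tail of B reaches the part X_n or the tail of B' reaches X_m, and with the slow-growth condition on the p_i's the two blocks share a common point. -/
import Mathlib


/-- Size of the part `X n` in the construction `𝔽(k,t)`. -/
def Fsize (k t n : ℕ) : ℕ := if n ≤ (t - 1) / 2 then k - t / 2 else k - (t - 1) / 2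

/-- The part `X n`, realized as pairs `(n, p)` with `p < |X n|`. -/
def Xpart (k t n : ℕ) : Finset (ℕ × ℕ) := (Finset.range (Fsize k t n)).image (fun p => (n, p))

/-- The slow-growth condition on the sequence `p`: `p 0 = 0` and each step stays or goes up by 1. -/
def slow (p : ℕ → ℕ) : Prop := p 0 = 0 ∧ ∀ m, 1 ≤ m → p m = p (m - 1) ∨ p m = p (m - 1) + 1

/-- The block of `𝔽(k,t)` determined by the base part `n` and sequence `p`. -/
def Fblock (k t n : ℕ) (p : ℕ → ℕ) : Finset (ℕ × ℕ) :=
  Xpart k t n ∪ (Finset.Icc 1 (k - Fsize k t n)).image (fun i => ((n + i) % t, p i))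

/-- The family `𝔽(k,t)`. -/
def Ffam (k t : ℕ) : Set (Finset (ℕ × ℕ)) :=
  {B | ∃ n < t, ∃ p : ℕ → ℕ, slow p ∧ B = Fblock k t n p}

/-- `C` is a blocking set of `𝔽(k,t)`. -/
def IsBlocking (k t : ℕ) (C : Finset (ℕ × ℕ)) : Prop := ∀ B ∈ Ffam k t, (C ∩ B).Nonempty

/-- The transversal number of `𝔽(k,t)`. -/
noncomputable def tau (k t : ℕ) : ℕ := sInf {m | ∃ C : Finset (ℕ × ℕ), C.card = m ∧ IsBlocking k t C}

/-- A slow sequence grows at most linearly. -/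
lemma slow_le (p : ℕ → ℕ) (hp : slow p) : ∀ d, p d ≤ d := by
  intro d
  induction d with
  | zero => exact hp.1.le
  | succ d ih =>
      rcases hp.2 (d + 1) (by omega) with h | h <;>
        simp only [Nat.add_sub_cancel] at h <;> omega

/-- Tail points belong to the block. -/
lemma mem_tail (k t m : ℕ) (p : ℕ → ℕ) (i : ℕ) (h1 : 1 ≤ i) (h2 : i ≤ k - Fsize k t m) :
    ((m + i) % t, p i) ∈ Fblock k t m p := by
  unfold Fblock
  exact Finset.mem_union_right _
    (Finset.mem_image.mpr ⟨i, Finset.mem_Icc.mpr ⟨h1, h2⟩, rfl⟩)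

/-- Base-part points belong to the block. -/
lemma mem_part (k t n a : ℕ) (q : ℕ → ℕ) (h : a < Fsize k t n) :
    (n, a) ∈ Fblock k t n q := by
  unfold Fblock Xpart
  exact Finset.mem_union_left _
    (Finset.mem_image.mpr ⟨a, Finset.mem_range.mpr h, rfl⟩)

/-- If the tail of the first block reaches the base part of the second low enough,
the blocks meet. -/
lemma meet_aux (k t m n d : ℕ) (p q : ℕ → ℕ) (hmod : (m + d) % t = n)
    (h1 : 1 ≤ d) (h2 : d ≤ k - Fsize k t m) (h3 : p d < Fsize k t n) :
    (Fblock k t m p ∩ Fblock k t n q).Nonempty := by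
  refine ⟨(n, p d), Finset.mem_inter.mpr ⟨?_, mem_part k t n (p d) q h3⟩⟩
  have := mem_tail k t m p d h1 h2
  rwa [hmod] at this

/-- Two blocks of `𝔽(k,t)` with distinct base parts share a common point. -/
theorem blocks_meet (k t : ℕ) (ht : 0 < t) (htk : t ≤ k)
    (m n : ℕ) (hm : m < t) (hn : n < t) (hmn : m ≠ n)
    (p q : ℕ → ℕ) (hp : slow p) (hq : slow q) :
    (Fblock k t m p ∩ Fblock k t n q).Nonempty := by
  -- the cyclic distance from m to n
  set d : ℕ := if m < n then n - m else n + t - m with hd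
  have hsum : m + d = n ∨ m + d = n + t := by
    rw [hd]; split <;> omega
  have hd1 : 1 ≤ d := by rw [hd]; split <;> omega
  have hdt : d ≤ t - 1 := by rw [hd]; split <;> omega
  have hmod : (m + d) % t = n := by
    rcases hsum with h | h
    · rw [h, Nat.mod_eq_of_lt hn]
    · rw [h, Nat.add_mod_right, Nat.mod_eq_of_lt hn]
  have hmod' : (n + (t - d)) % t = m := by
    rcases hsum with h | h
    · have : n + (t - d) = m + t := by omega
      rw [this, Nat.add_mod_right, Nat.mod_eq_of_lt hm]
    · have : n + (t - d) = m := by omega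
      rw [this, Nat.mod_eq_of_lt hm]
  -- Fsize facts
  have hFm : (m ≤ (t - 1) / 2 ∧ Fsize k t m = k - t / 2) ∨
      (¬ m ≤ (t - 1) / 2 ∧ Fsize k t m = k - (t - 1) / 2) := by
    by_cases h : m ≤ (t - 1) / 2 <;> simp [Fsize, h]
  have hFn : (n ≤ (t - 1) / 2 ∧ Fsize k t n = k - t / 2) ∨
      (¬ n ≤ (t - 1) / 2 ∧ Fsize k t n = k - (t - 1) / 2) := by
    by_cases h : n ≤ (t - 1) / 2 <;> simp [Fsize, h]
  have hpd : p d ≤ d := slow_le p hp d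
  have hqd : q (t - d) ≤ t - d := slow_le q hq (t - d)
  by_cases hA : d ≤ (t - 1) / 2 ∨ (2 * d = t ∧ m ≤ (t - 1) / 2)
  · exact meet_aux k t m n d p q hmod hd1 (by omega) (by omega)
  · rw [Finset.inter_comm]
    refine meet_aux k t n m (t - d) q p hmod' (by omega) (by omega) (by omega)
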